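/- Let (X,d) be a metric space, K ∈ ℝ, E lower semi-continuous, μ a probability measure with finite variance, ε ≥ 0, and y a point with ∫ d²(y,z) dμ(z) ≤ Var(μ) + ε. If there is an EVI_K gradient flow (y_t) of E starting from y, then for all t > 0: E(y_t) ≤ ∫ E(z) dμ(z) − (K/2)Var(μ) + ε/(2 I_K(t)), where I_K(t) = ∫₀^t e^{Kr} dr. -/

import Mathlib

/-!
For `z` in the domain of `E`, the EVI inequality rearranges to
`E(y_t) + (e^{Kt} d²(y_t, z) - d²(y₀, z)) / (2 I_K(t)) ≤ E(z)` (and forces `E ≡ +∞` when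
`E(y_t) = +∞`). Integrating in `z` against `μ`, the second moment at `y_t` is at least `Var(μ)`
and the one at `y₀` at most `Var(μ) + ε`, and `e^{Kt} - 1 = K I_K(t)` turns the coefficients
into `K/2` and `ε / (2 I_K(t))`.
-/

open MeasureTheory
open scoped ENNReal

/-- The positive part of an extended real, as an element of `ℝ≥0∞`. -/
noncomputable def ERealPos (a : EReal) : ℝ≥0∞ :=
  if a = ⊤ then ⊤ else ENNReal.ofReal a.toReal

/-- Integral of an `EReal`-valued function (with values in `ℝ ∪ {+∞}`). -/
noncomputable def ERealIntegral {X : Type*} [MeasurableSpace X]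
    (μ : MeasureTheory.Measure X) (E : X → EReal) : EReal :=
  ((∫⁻ z, ERealPos (E z) ∂μ : ℝ≥0∞) : EReal) - ((∫⁻ z, ERealPos (-(E z)) ∂μ : ℝ≥0∞) : EReal)

lemma ERealPos_coe (r : ℝ) : ERealPos r = ENNReal.ofReal r := by
  simp [ERealPos]

lemma ERealPos_mono : Monotone ERealPos := by
  intro a b hab
  unfold ERealPos
  by_cases hb : b = ⊤
  · simp [hb]
  have ha : a ≠ ⊤ := ne_top_of_le_ne_top hb hab
  rw [if_neg ha, if_neg hb]
  rcases eq_or_ne a ⊥ with rfl | ha'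
  · simp
  exact ENNReal.ofReal_le_ofReal (EReal.toReal_le_toReal hab ha' hb)

section ERealIntegral

variable {X : Type*} [MeasurableSpace X] {μ : Measure X}

lemma ERealIntegral_mono {F G : X → EReal} (hFG : F ≤ G) :
    ERealIntegral μ F ≤ ERealIntegral μ G :=
  EReal.sub_le_sub
    (EReal.coe_ennreal_le_coe_ennreal_iff.2 (lintegral_mono fun z => ERealPos_mono (hFG z)))
    (EReal.coe_ennreal_le_coe_ennreal_iff.2
      (lintegral_mono fun z => ERealPos_mono (EReal.neg_le_neg_iff.2 (hFG z))))

lemma ERealIntegral_coe {g : X → ℝ} (hg : Integrable g μ) :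
    ERealIntegral μ (fun z => (g z : EReal)) = ((∫ z, g z ∂μ : ℝ) : EReal) := by
  have hpos : ∫⁻ z, ENNReal.ofReal (g z) ∂μ ≠ ⊤ := hg.lintegral_lt_top.ne
  have hneg : ∫⁻ z, ENNReal.ofReal (-g z) ∂μ ≠ ⊤ := hg.neg.lintegral_lt_top.ne
  simp only [ERealIntegral, ← EReal.coe_neg, ERealPos_coe]
  rw [integral_eq_lintegral_pos_part_sub_lintegral_neg_part hg, EReal.coe_sub,
    EReal.coe_ennreal_toReal hpos, EReal.coe_ennreal_toReal hneg]

lemma coe_integral_le_ERealIntegral {g : X → ℝ} {E : X → EReal} (hg : Integrable g μ)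
    (hgE : ∀ z, (g z : EReal) ≤ E z) : ((∫ z, g z ∂μ : ℝ) : EReal) ≤ ERealIntegral μ E :=
  ERealIntegral_coe hg ▸ ERealIntegral_mono hgE

lemma ERealIntegral_top [NeZero μ] : ERealIntegral μ (fun _ => ⊤) = ⊤ := by
  simp [ERealIntegral, ERealPos, NeZero.ne μ]

end ERealIntegral

lemma edist_sq_eq_ofReal {X : Type*} [PseudoMetricSpace X] (x z : X) :
    edist x z ^ 2 = ENNReal.ofReal (dist x z ^ 2) := by
  rw [edist_dist, ← ENNReal.ofReal_pow dist_nonneg]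

section SecondMoment

variable {X : Type*} [PseudoMetricSpace X] [MeasurableSpace X] {μ : Measure X}

lemma lintegral_edist_sq_eq_ofReal_integral {x : X} (hx : Integrable (fun z => dist x z ^ 2) μ) :
    ∫⁻ z, edist x z ^ 2 ∂μ = ENNReal.ofReal (∫ z, dist x z ^ 2 ∂μ) := by
  rw [ofReal_integral_eq_lintegral_ofReal hx (.of_forall fun z => by positivity)]
  simp only [edist_sq_eq_ofReal]

lemma toReal_iInf_lintegral_edist_sq_le_integral {x : X}
    (hx : Integrable (fun z => dist x z ^ 2) μ) :
    (⨅ x' : X, ∫⁻ z, edist x' z ^ 2 ∂μ).toReal ≤ ∫ z, dist x z ^ 2 ∂μ :=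
  ENNReal.toReal_le_of_le_ofReal (integral_nonneg fun _ => by positivity)
    (lintegral_edist_sq_eq_ofReal_integral hx ▸ iInf_le _ x)

lemma integrable_dist_sq_of_lintegral_ne_top [OpensMeasurableSpace X] {x : X}
    (hx : ∫⁻ z, edist x z ^ 2 ∂μ ≠ ⊤) :
    Integrable (fun z => dist x z ^ 2) μ := by
  refine ⟨by fun_prop, (hasFiniteIntegral_iff_ofReal (.of_forall fun z => by positivity)).2 ?_⟩
  simpa only [← edist_sq_eq_ofReal] using hx.lt_top

lemma integrable_dist_sq_of_integrable [OpensMeasurableSpace X] [IsFiniteMeasure μ] {x : X}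
    (hx : Integrable (fun z => dist x z ^ 2) μ) (x' : X) :
    Integrable (fun z => dist x' z ^ 2) μ := by
  refine ((integrable_const (2 * dist x' x ^ 2)).add (hx.const_mul 2)).mono' (by fun_prop)
    (.of_forall fun z => ?_)
  rw [Real.norm_of_nonneg (sq_nonneg _)]
  show dist x' z ^ 2 ≤ 2 * dist x' x ^ 2 + 2 * dist x z ^ 2
  nlinarith [pow_le_pow_left₀ dist_nonneg (dist_triangle x' x z) 2,
    sq_nonneg (dist x' x - dist x z)]

lemma integral_dist_sq_le_toReal_of_lintegral_le [OpensMeasurableSpace X] {x : X} {C : ℝ≥0∞}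
    (hC : C ≠ ⊤) (hx : ∫⁻ z, edist x z ^ 2 ∂μ ≤ C) : ∫ z, dist x z ^ 2 ∂μ ≤ C.toReal :=
  (ENNReal.ofReal_le_iff_le_toReal hC).1 <| lintegral_edist_sq_eq_ofReal_integral
    (integrable_dist_sq_of_lintegral_ne_top (ne_top_of_le_ne_top hC hx)) ▸ hx

lemma coe_add_div_le_ERealIntegral [IsProbabilityMeasure μ] {E : X → EReal} {x₀ x₁ : X}
    (h₀ : Integrable (fun z => dist x₀ z ^ 2) μ) (h₁ : Integrable (fun z => dist x₁ z ^ 2) μ)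
    {a c₀ c₁ I : ℝ}
    (hE : ∀ z, ((a + (c₁ * dist x₁ z ^ 2 - c₀ * dist x₀ z ^ 2) / I : ℝ) : EReal) ≤ E z) :
    ((a + (c₁ * ∫ z, dist x₁ z ^ 2 ∂μ - c₀ * ∫ z, dist x₀ z ^ 2 ∂μ) / I : ℝ) : EReal)
      ≤ ERealIntegral μ E := by
  have h := coe_integral_le_ERealIntegral (μ := μ) (by fun_prop) hE
  rwa [integral_add (integrable_const a) (by fun_prop), integral_const, probReal_univ, one_smul,
    integral_div, integral_sub (by fun_prop) (by fun_prop), integral_const_mul,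
    integral_const_mul] at h

end SecondMoment

lemma exp_mul_sub_one_eq_mul_integral (K t : ℝ) :
    Real.exp (K * t) - 1 = K * ∫ r in (0:ℝ)..t, Real.exp (K * r) := by
  rcases eq_or_ne K 0 with rfl | hK
  · simp
  rw [intervalIntegral.integral_comp_mul_left (fun u => Real.exp u) hK, integral_exp]
  simp [mul_inv_cancel_left₀ hK]

lemma integral_exp_mul_pos (K : ℝ) {t : ℝ} (ht : 0 < t) :
    0 < ∫ r in (0:ℝ)..t, Real.exp (K * r) :=
  intervalIntegral.intervalIntegral_pos_of_pos
    ((Real.continuous_exp.comp (continuous_const_mul K)).intervalIntegrable _ _)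
    (fun _ => Real.exp_pos _) ht

lemma sub_div_le_of_moment_bounds {c K I V M₀ M₁ ε : ℝ} (hc : 0 ≤ c) (hI : 0 < I)
    (hcKI : c - 1 = K * I) (hM₁ : V ≤ M₁) (hM₀ : M₀ ≤ V + ε) :
    K / 2 * V - ε / (2 * I) ≤ (c / 2 * M₁ - 1 / 2 * M₀) / I := by
  have hdiff : (c / 2 * M₁ - 1 / 2 * M₀) / I - (K / 2 * V - ε / (2 * I))
      = (c * (M₁ - V) + (V + ε - M₀)) / (2 * I) := by
    field_simp
    linear_combination V * hcKI
  have : 0 ≤ (c * (M₁ - V) + (V + ε - M₀)) / (2 * I) :=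
    div_nonneg (add_nonneg (mul_nonneg hc (sub_nonneg.2 hM₁)) (by linarith)) (by positivity)
  linarith

lemma EReal.add_coe_div_le_of_coe_le_mul_sub {I s : ℝ} (hI : 0 < I) {a e : EReal}
    (h : (s : EReal) ≤ (I : EReal) * (e - a)) : a + ((s / I : ℝ) : EReal) ≤ e := by
  induction a using EReal.rec with
  | bot => simp
  | top =>
    rw [EReal.sub_top, EReal.coe_mul_bot_of_pos hI, le_bot_iff] at h
    exact absurd h (EReal.coe_ne_bot s)
  | coe a =>
    induction e using EReal.rec with
    | bot =>
      rw [EReal.bot_sub, EReal.coe_mul_bot_of_pos hI, le_bot_iff] at h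
      exact absurd h (EReal.coe_ne_bot s)
    | top => exact le_top
    | coe b =>
      rw [← EReal.coe_sub, ← EReal.coe_mul, EReal.coe_le_coe_iff] at h
      rw [← EReal.coe_add, EReal.coe_le_coe_iff]
      linarith [(div_le_iff₀' hI).2 h]

theorem stmt6_general {X : Type*} [MetricSpace X] [MeasurableSpace X] [BorelSpace X]
    (K : ℝ) (E : X → EReal)
    (μ : Measure X) [IsProbabilityMeasure μ]
    (hVar : (⨅ x : X, ∫⁻ z, edist x z ^ 2 ∂μ) < ⊤)
    (ε : ℝ) (hε : 0 ≤ ε) (y₀ : X)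
    (hnear : ∫⁻ z, edist y₀ z ^ 2 ∂μ
      ≤ (⨅ x : X, ∫⁻ z, edist x z ^ 2 ∂μ) + ENNReal.ofReal ε)
    (y : ℝ → X)
    (hEVI : ∀ z : X, E z ≠ ⊤ → ∀ t : ℝ, 0 < t →
      ((Real.exp (K * t) / 2 * dist (y t) z ^ 2 - 1 / 2 * dist y₀ z ^ 2 : ℝ) : EReal)
        ≤ ((∫ r in (0:ℝ)..t, Real.exp (K * r) : ℝ) : EReal) * (E z - E (y t))) :
    ∀ t : ℝ, 0 < t →
      E (y t) ≤ ERealIntegral μ E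
        - ((K / 2 * (⨅ x : X, ∫⁻ z, edist x z ^ 2 ∂μ).toReal : ℝ) : EReal)
        + ((ε / (2 * ∫ r in (0:ℝ)..t, Real.exp (K * r)) : ℝ) : EReal) := by
  intro t ht
  set I := ∫ r in (0:ℝ)..t, Real.exp (K * r)
  set V := ⨅ x : X, ∫⁻ z, edist x z ^ 2 ∂μ
  have hI : 0 < I := integral_exp_mul_pos K ht
  have hbound (z : X) : E (y t) + (((Real.exp (K * t) / 2 * dist (y t) z ^ 2
      - 1 / 2 * dist y₀ z ^ 2) / I : ℝ) : EReal) ≤ E z := by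
    rcases eq_or_ne (E z) ⊤ with hz | hz
    · exact hz ▸ le_top
    · exact EReal.add_coe_div_le_of_coe_le_mul_sub hI (hEVI z hz t ht)
  induction hyt : E (y t) using EReal.rec with
  | bot => exact bot_le
  | top =>
    have hE : E = fun _ => ⊤ := funext fun z => top_le_iff.1 (by simpa [hyt] using hbound z)
    rw [hE, ERealIntegral_top, EReal.top_sub_coe, EReal.top_add_coe]
  | coe a =>
    have hnear_ne_top : V + ENNReal.ofReal ε ≠ ⊤ := ENNReal.add_ne_top.2 ⟨hVar.ne, by simp⟩
    have h₀ := integrable_dist_sq_of_lintegral_ne_top (ne_top_of_le_ne_top hnear_ne_top hnear)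
    have h₁ := integrable_dist_sq_of_integrable h₀ (y t)
    have hJensen := coe_add_div_le_ERealIntegral h₀ h₁ fun z => by simpa [hyt] using hbound z
    have hM₀ := integral_dist_sq_le_toReal_of_lintegral_le hnear_ne_top hnear
    rw [ENNReal.toReal_add hVar.ne ENNReal.ofReal_ne_top, ENNReal.toReal_ofReal hε] at hM₀
    have hcoeff := sub_div_le_of_moment_bounds (Real.exp_pos (K * t)).le hI
      (exp_mul_sub_one_eq_mul_integral K t) (toReal_iInf_lintegral_edist_sq_le_integral h₁) hM₀
    refine le_trans ?_ (add_le_add_left (EReal.sub_le_sub hJensen le_rfl) _)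
    norm_cast
    linarith

/-- Approximate Jensen's inequality along an `EVI_K` gradient flow started at
an `ε`-approximate barycenter. -/
theorem stmt6 {X : Type*} [MetricSpace X] [MeasurableSpace X] [BorelSpace X]
    (K : ℝ) (E : X → EReal) (hE : LowerSemicontinuous E)
    (μ : Measure X) [IsProbabilityMeasure μ]
    (hVar : (⨅ x : X, ∫⁻ z, edist x z ^ 2 ∂μ) < ⊤)
    (ε : ℝ) (hε : 0 ≤ ε) (y₀ : X)
    (hnear : ∫⁻ z, edist y₀ z ^ 2 ∂μ
      ≤ (⨅ x : X, ∫⁻ z, edist x z ^ 2 ∂μ) + ENNReal.ofReal ε)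
    (y : ℝ → X)
    (hEVI : ∀ z : X, E z ≠ ⊤ → ∀ t : ℝ, 0 < t →
      ((Real.exp (K * t) / 2 * dist (y t) z ^ 2 - 1 / 2 * dist y₀ z ^ 2 : ℝ) : EReal)
        ≤ ((∫ r in (0:ℝ)..t, Real.exp (K * r) : ℝ) : EReal) * (E z - E (y t))) :
    ∀ t : ℝ, 0 < t →
      E (y t) ≤ ERealIntegral μ E
        - ((K / 2 * (⨅ x : X, ∫⁻ z, edist x z ^ 2 ∂μ).toReal : ℝ) : EReal)
        + ((ε / (2 * ∫ r in (0:ℝ)..t, Real.exp (K * r)) : ℝ) : EReal) :=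
  stmt6_general K E μ hVar ε hε y₀ hnear y hEVI
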